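/- arXiv:2006.01020 — 4 statements merged into one kernel-verified Lean document; each statement's English description precedes it below -/
import Mathlib

section
/- If B is a bramble of order k in a graph G, then the scramble order of B is either k or k−1. -/
/-- A finite multigraph on vertex set `V`: `mul u v` is the number of
parallel edges between `u` and `v`; there are no loops. -/
structure Multigraph (V : Type) where
  mul : V → V → ℕ
  symm : ∀ u v, mul u v = mul v u
  loopless : ∀ v, mul v v = 0

namespace Multigraph

variable {V : Type}

/-- Adjacency in a multigraph. -/
def Adj (G : Multigraph V) (u v : V) : Prop := 0 < G.mul u v

/-- The underlying simple graph of a multigraph. -/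
def simple (G : Multigraph V) : SimpleGraph V where
  Adj u v := 0 < G.mul u v
  symm := ⟨fun u v h => by simpa [G.symm u v] using h⟩
  loopless := ⟨fun v h => by simp [G.loopless] at h⟩

/-- A multigraph is connected if its underlying simple graph is. -/
def Connected (G : Multigraph V) : Prop := G.simple.Connected

/-- A (nonempty) connected subset of the vertices of a multigraph. -/
def ConnSubset (G : Multigraph V) (B : Finset V) : Prop :=
  B.Nonempty ∧ (SimpleGraph.induce (B : Set V) G.simple).Connected

variable [Fintype V] [DecidableEq V]

/-- The number of edges between `A` and its complement. -/
def cut (G : Multigraph V) (A : Finset V) : ℕ :=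
  ∑ u ∈ A, ∑ v ∈ Aᶜ, G.mul u v

/-- A scramble: a collection of eggs, each a nonempty connected vertex subset. -/
def IsScramble (G : Multigraph V) (S : Finset (Finset V)) : Prop :=
  ∀ E ∈ S, G.ConnSubset E

/-- A hitting set for a scramble: a set of vertices meeting every egg. -/
def IsHitting (S : Finset (Finset V)) (C : Finset V) : Prop :=
  ∀ E ∈ S, (E ∩ C).Nonempty

/-- `k` is a valid order for the scramble `S` if no hitting set has fewer than `k`
vertices, and every vertex set `A` containing an egg, with an egg in its
complement, has at least `k` crossing edges. -/
def ValidOrder (G : Multigraph V) (S : Finset (Finset V)) (k : ℕ) : Prop :=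
  (∀ C : Finset V, IsHitting S C → k ≤ C.card) ∧
  (∀ A : Finset V, (∃ E ∈ S, E ⊆ A) → (∃ E' ∈ S, E' ⊆ Aᶜ) → k ≤ G.cut A)

/-- The scramble order `‖S‖`: the largest valid order. -/
noncomputable def scrambleOrder (G : Multigraph V) (S : Finset (Finset V)) : ℕ :=
  sSup {k | ValidOrder G S k}

/-- The scramble number of a multigraph: the maximum scramble order of a scramble. -/
noncomputable def scrambleNumber (G : Multigraph V) : ℕ :=
  sSup {n | ∃ S, IsScramble G S ∧ scrambleOrder G S = n}

end Multigraph

namespace Multigraph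

variable {V : Type} [Fintype V] [DecidableEq V]

/-- A bramble: a scramble in which the union of any two eggs is connected. -/
def IsBramble (G : Multigraph V) (S : Finset (Finset V)) : Prop :=
  IsScramble G S ∧ ∀ E ∈ S, ∀ E' ∈ S, G.ConnSubset (E ∪ E')

/-- A strict bramble: a bramble in which any two eggs intersect. -/
def IsStrictBramble (G : Multigraph V) (S : Finset (Finset V)) : Prop :=
  IsBramble G S ∧ ∀ E ∈ S, ∀ E' ∈ S, (E ∩ E').Nonempty

/-- The order of a bramble: the minimum size of a hitting set. -/
noncomputable def brambleOrder (S : Finset (Finset V)) : ℕ :=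
  sInf {n | ∃ C : Finset V, IsHitting S C ∧ C.card = n}

end Multigraph

/-! Let `A` contain an egg and `Aᶜ` contain an egg. Orient the crossing edges from `A` to `Aᶜ` and
pick an egg `F₀ ⊆ A` with the fewest crossing edges leaving it. Replace each crossing edge by its
head if its tail lies in `F₀` and by its tail otherwise, and add the tail `u` of one crossing edge
leaving `F₀` (one exists because `F₀ ∪ E'` is connected for an egg `E' ⊆ Aᶜ`). This meets every
egg: an egg not inside `A` is joined to `F₀` by a crossing edge with head in it; an egg inside `A`
either has a crossing edge leaving it that does not leave `F₀`, or, by minimality, exactly the same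
crossing edges as `F₀`, and then it contains `u`. So the bramble order `k` is at most the size of
every such cut plus one, which makes `k - 1` a valid order, while `k` bounds every valid order. -/

namespace Multigraph

variable {V : Type} [Fintype V] [DecidableEq V] (G : Multigraph V)

def crossingPairs (A : Finset V) : Finset (V × V) :=
  (A ×ˢ Aᶜ).filter fun p => 0 < G.mul p.1 p.2

variable {G} {S : Finset (Finset V)}

omit [Fintype V] [DecidableEq V] in
theorem ConnSubset.exists_adj_of_mem_of_notMem {F : Finset V} (hF : G.ConnSubset F)
    {A : Finset V} {x y : V} (hx : x ∈ F) (hxA : x ∈ A) (hy : y ∈ F) (hyA : y ∉ A) :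
    ∃ u ∈ F, ∃ v ∈ F, u ∈ A ∧ v ∉ A ∧ G.Adj u v := by
  obtain ⟨p⟩ := hF.2.preconnected ⟨x, hx⟩ ⟨y, hy⟩
  obtain ⟨d, -, hfst, hsnd⟩ := p.exists_boundary_dart {z | (z : V) ∈ A} hxA hyA
  exact ⟨d.fst, d.fst.2, d.snd, d.snd.2, hfst, hsnd, d.adj⟩

theorem mem_crossingPairs {A : Finset V} {p : V × V} :
    p ∈ G.crossingPairs A ↔ p.1 ∈ A ∧ p.2 ∉ A ∧ G.Adj p.1 p.2 := by
  simp [crossingPairs, Adj, and_assoc]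

theorem card_crossingPairs_le_cut (A : Finset V) : (G.crossingPairs A).card ≤ G.cut A :=
  calc (G.crossingPairs A).card
      ≤ ∑ p ∈ G.crossingPairs A, G.mul p.1 p.2 :=
        (Finset.card_eq_sum_ones _).trans_le
          (Finset.sum_le_sum fun _ hp => (mem_crossingPairs.1 hp).2.2)
    _ ≤ ∑ p ∈ A ×ˢ Aᶜ, G.mul p.1 p.2 := Finset.sum_le_sum_of_subset (Finset.filter_subset _ _)
    _ = G.cut A := by rw [cut, Finset.sum_product]

theorem IsBramble.exists_crossingPairs_of_not_subset
    (hS : IsBramble G S) {A F₀ F : Finset V} (hF₀ : F₀ ∈ S) (hF₀A : F₀ ⊆ A) (hF : F ∈ S)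
    (hFA : ¬F ⊆ A) :
    ∃ p ∈ G.crossingPairs A, p.1 ∈ F ∪ F₀ ∧ p.2 ∈ F := by
  obtain ⟨x, hx⟩ := (hS.1 F₀ hF₀).1
  obtain ⟨y, hyF, hyA⟩ := Finset.not_subset.1 hFA
  obtain ⟨u, hu, v, hv, huA, hvA, huv⟩ := (hS.2 F hF F₀ hF₀).exists_adj_of_mem_of_notMem
    (Finset.mem_union_right _ hx) (hF₀A hx) (Finset.mem_union_left _ hyF) hyA
  have hvF : v ∈ F := (Finset.mem_union.1 hv).resolve_right fun h => hvA (hF₀A h)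
  exact ⟨(u, v), mem_crossingPairs.2 ⟨huA, hvA, huv⟩, hu, hvF⟩

theorem IsBramble.isHitting_insert_image_crossingPairs
    (hS : IsBramble G S) {A F₀ : Finset V} (hF₀ : F₀ ∈ S) (hF₀A : F₀ ⊆ A)
    (hmin : ∀ F ∈ S, F ⊆ A →
      ((G.crossingPairs A).filter (·.1 ∈ F₀)).card ≤ ((G.crossingPairs A).filter (·.1 ∈ F)).card)
    {p₀ : V × V} (hp₀ : p₀ ∈ G.crossingPairs A) (hp₀F₀ : p₀.1 ∈ F₀) :
    IsHitting S (insert p₀.1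
      ((G.crossingPairs A).image fun p => if p.1 ∈ F₀ then p.2 else p.1)) := by
  set P := G.crossingPairs A
  have hit : ∀ {F : Finset V}, ∀ p ∈ P, (if p.1 ∈ F₀ then p.2 else p.1) ∈ F →
      (F ∩ insert p₀.1 (P.image fun p => if p.1 ∈ F₀ then p.2 else p.1)).Nonempty :=
    fun p hp hpF => ⟨_, Finset.mem_inter.2
      ⟨hpF, Finset.mem_insert_of_mem (Finset.mem_image_of_mem _ hp)⟩⟩
  intro F hF
  by_cases hFA : F ⊆ A
  · by_cases hsub : P.filter (·.1 ∈ F) ⊆ P.filter (·.1 ∈ F₀)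
    · have heq := Finset.eq_of_subset_of_card_le hsub (hmin F hF hFA)
      have hp₀F : p₀ ∈ P.filter (·.1 ∈ F) := heq ▸ Finset.mem_filter.2 ⟨hp₀, hp₀F₀⟩
      exact ⟨p₀.1, Finset.mem_inter.2 ⟨(Finset.mem_filter.1 hp₀F).2, Finset.mem_insert_self _ _⟩⟩
    · obtain ⟨p, hpF, hpF₀⟩ := Finset.not_subset.1 hsub
      obtain ⟨hp, hp1F⟩ := Finset.mem_filter.1 hpF
      have hp1F₀ : p.1 ∉ F₀ := fun h => hpF₀ (Finset.mem_filter.2 ⟨hp, h⟩)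
      exact hit p hp (by rwa [if_neg hp1F₀])
  · obtain ⟨p, hp, hp1, hp2⟩ := hS.exists_crossingPairs_of_not_subset hF₀ hF₀A hF hFA
    by_cases hp1F₀ : p.1 ∈ F₀
    · exact hit p hp (by rwa [if_pos hp1F₀])
    · exact hit p hp (by rw [if_neg hp1F₀]; exact (Finset.mem_union.1 hp1).resolve_right hp1F₀)

theorem IsBramble.exists_isHitting_card_le_cut_add_one
    (hS : IsBramble G S) {A E E' : Finset V} (hE : E ∈ S) (hEA : E ⊆ A) (hE' : E' ∈ S)
    (hE'A : E' ⊆ Aᶜ) :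
    ∃ C, IsHitting S C ∧ C.card ≤ G.cut A + 1 := by
  have hF₀_exists := Finset.exists_min_image (S.filter fun F => F ⊆ A)
    (fun F => ((G.crossingPairs A).filter fun p => p.1 ∈ F).card)
    ⟨E, Finset.mem_filter.2 ⟨hE, hEA⟩⟩
  obtain ⟨F₀, hF₀, hmin⟩ := hF₀_exists
  obtain ⟨hF₀S, hF₀A⟩ := Finset.mem_filter.1 hF₀
  have hE'F₀ : ¬E' ⊆ A := fun h => by
    obtain ⟨y, hy⟩ := (hS.1 E' hE').1
    exact Finset.mem_compl.1 (hE'A hy) (h hy)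
  obtain ⟨p₀, hp₀, hp₀1, -⟩ := hS.exists_crossingPairs_of_not_subset hF₀S hF₀A hE' hE'F₀
  have hp₀F₀ : p₀.1 ∈ F₀ := (Finset.mem_union.1 hp₀1).resolve_left fun h =>
    Finset.mem_compl.1 (hE'A h) (mem_crossingPairs.1 hp₀).1
  refine ⟨_, hS.isHitting_insert_image_crossingPairs hF₀S hF₀A
    (fun F hF hFA => hmin F (Finset.mem_filter.2 ⟨hF, hFA⟩)) hp₀ hp₀F₀, ?_⟩
  calc _ ≤ ((G.crossingPairs A).image _).card + 1 := Finset.card_insert_le _ _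
    _ ≤ (G.crossingPairs A).card + 1 := Nat.add_le_add_right Finset.card_image_le 1
    _ ≤ G.cut A + 1 := Nat.add_le_add_right (card_crossingPairs_le_cut A) 1

omit [Fintype V] in
theorem brambleOrder_le_card {C : Finset V} (hC : IsHitting S C) :
    brambleOrder S ≤ C.card :=
  Nat.sInf_le ⟨C, hC, rfl⟩

theorem IsScramble.exists_isHitting_card_eq_brambleOrder
    (hS : IsScramble G S) : ∃ C, IsHitting S C ∧ C.card = brambleOrder S :=
  Nat.sInf_mem (s := {n | ∃ C, IsHitting S C ∧ C.card = n})
    ⟨Fintype.card V, Finset.univ, fun E hE => by simpa using (hS E hE).1, rfl⟩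

theorem ValidOrder.le_brambleOrder (hS : IsScramble G S) {m : ℕ}
    (hm : ValidOrder G S m) : m ≤ brambleOrder S := by
  obtain ⟨C, hC, hCcard⟩ := hS.exists_isHitting_card_eq_brambleOrder
  exact hCcard ▸ hm.1 C hC

theorem IsBramble.validOrder_brambleOrder_sub_one (hS : IsBramble G S) :
    ValidOrder G S (brambleOrder S - 1) := by
  refine ⟨fun C hC => (Nat.sub_le _ 1).trans (brambleOrder_le_card hC), ?_⟩
  rintro A ⟨E, hE, hEA⟩ ⟨E', hE', hE'A⟩
  obtain ⟨C, hC, hCcard⟩ := hS.exists_isHitting_card_le_cut_add_one hE hEA hE' hE'A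
  have := brambleOrder_le_card hC
  omega

theorem IsScramble.scrambleOrder_le_brambleOrder (hS : IsScramble G S) :
    scrambleOrder G S ≤ brambleOrder S :=
  csSup_le ⟨0, fun _ _ => Nat.zero_le _, fun _ _ _ => Nat.zero_le _⟩
    fun _ hm => hm.le_brambleOrder hS

theorem IsBramble.brambleOrder_sub_one_le_scrambleOrder
    (hS : IsBramble G S) : brambleOrder S - 1 ≤ scrambleOrder G S :=
  le_csSup ⟨_, fun _ hm => hm.le_brambleOrder hS.1⟩ hS.validOrder_brambleOrder_sub_one

end Multigraph

open Multigraph in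
theorem scrambleOrder_of_bramble_general {V : Type} [Fintype V] [DecidableEq V]
    (G : Multigraph V) (S : Finset (Finset V)) (k : ℕ)
    (hS : IsBramble G S) (hk : brambleOrder S = k) :
    scrambleOrder G S = k ∨ scrambleOrder G S = k - 1 := by
  have hle := hS.1.scrambleOrder_le_brambleOrder
  have hge := hS.brambleOrder_sub_one_le_scrambleOrder
  omega

open Multigraph in
/-- If `B` is a bramble of order `k`, then its scramble order is `k` or `k - 1`. -/
theorem scrambleOrder_of_bramble {V : Type} [Fintype V] [DecidableEq V]
    (G : Multigraph V) (hG : G.Connected) (S : Finset (Finset V)) (k : ℕ)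
    (hS : IsBramble G S) (hk : brambleOrder S = k) :
    scrambleOrder G S = k ∨ scrambleOrder G S = k - 1 :=
  scrambleOrder_of_bramble_general G S k hS hk
end

section
/- If S' is a scramble in a subgraph G' of G, and S is the scramble in G with the same eggs, then the scramble order of S in G is at least the scramble order of S' in G'. -/
namespace Multigraph

/-- `G'` is a subgraph of `G`: it can be obtained from `G` by deleting edges and
(isolated) vertices; equivalently, the vertices of `G'` inject into those of `G`
with edge multiplicities not exceeding those of `G`. -/
def IsSubgraph {V' V : Type} (G' : Multigraph V') (G : Multigraph V) : Prop :=
  ∃ f : V' → V, Function.Injective f ∧ ∀ a b, G'.mul a b ≤ G.mul (f a) (f b)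

end Multigraph


/-! Pulling a vertex set of `G` back along the embedding `f` turns hitting sets and cuts of `G`
into hitting sets and cuts of `G'` that are no larger, while eggs stay inside (or outside) the
pulled-back set; so every valid order of `S'` in `G'` is a valid order of its image in `G`. -/

open Finset

namespace Multigraph

variable {V' V : Type} [DecidableEq V'] [DecidableEq V]

lemma validOrder_zero [Fintype V] (G : Multigraph V) (S : Finset (Finset V)) : ValidOrder G S 0 :=
  ⟨fun _ _ => Nat.zero_le _, fun _ _ _ => Nat.zero_le _⟩

/-- An empty egg forces order `0` through the cut of `∅`; otherwise `univ` is a hitting set. -/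
lemma ValidOrder.le_card [Fintype V] {G : Multigraph V} {S : Finset (Finset V)} {k : ℕ}
    (h : ValidOrder G S k) : k ≤ Fintype.card V := by
  by_cases hempty : ∅ ∈ S
  · have := h.2 ∅ ⟨∅, hempty, subset_rfl⟩ ⟨∅, hempty, empty_subset _⟩
    simp_all [cut]
  · have huniv : IsHitting S univ := fun E hE => by
      simpa [nonempty_iff_ne_empty] using ne_of_mem_of_not_mem hE hempty
    simpa using h.1 univ huniv

lemma bddAbove_validOrder [Fintype V] (G : Multigraph V) (S : Finset (Finset V)) :
    BddAbove {k | ValidOrder G S k} :=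
  ⟨Fintype.card V, fun _ hk => ValidOrder.le_card hk⟩

variable {f : V' → V}

lemma IsHitting.preimage_of_image {S' : Finset (Finset V')} {C : Finset V}
    (hC : IsHitting (S'.image (image f)) C) (hf : Function.Injective f) :
    IsHitting S' (C.preimage f hf.injOn) := by
  intro E hE
  obtain ⟨_, hx⟩ := hC (E.image f) (mem_image_of_mem _ hE)
  obtain ⟨hxE, hxC⟩ := mem_inter.mp hx
  obtain ⟨e, he, rfl⟩ := mem_image.mp hxE
  exact ⟨e, mem_inter.mpr ⟨he, mem_preimage.mpr hxC⟩⟩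

variable [Fintype V'] [Fintype V]

lemma cut_preimage_le {G' : Multigraph V'} {G : Multigraph V} (hf : Function.Injective f)
    (hle : ∀ a b, G'.mul a b ≤ G.mul (f a) (f b)) (A : Finset V) :
    G'.cut (A.preimage f hf.injOn) ≤ G.cut A := by
  classical
  unfold cut
  rw [← preimage_compl A hf]
  calc ∑ u ∈ A.preimage f hf.injOn, ∑ v ∈ Aᶜ.preimage f hf.injOn, G'.mul u v
      ≤ ∑ u ∈ A.preimage f hf.injOn, ∑ v ∈ Aᶜ.preimage f hf.injOn, G.mul (f u) (f v) :=
        sum_le_sum fun u _ => sum_le_sum fun v _ => hle u v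
    _ = ∑ x ∈ A with x ∈ Set.range f, ∑ y ∈ Aᶜ with y ∈ Set.range f, G.mul x y := by
        simp only [sum_preimage']
        exact sum_preimage' f A _ fun x => ∑ y ∈ Aᶜ with y ∈ Set.range f, G.mul x y
    _ ≤ ∑ x ∈ A, ∑ y ∈ Aᶜ, G.mul x y :=
        (sum_le_sum fun _ _ => sum_le_sum_of_subset (filter_subset _ _)).trans
          (sum_le_sum_of_subset (filter_subset _ _))

lemma ValidOrder.image {G' : Multigraph V'} {G : Multigraph V} {S' : Finset (Finset V')} {k : ℕ}
    (h : ValidOrder G' S' k) (hf : Function.Injective f)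
    (hle : ∀ a b, G'.mul a b ≤ G.mul (f a) (f b)) :
    ValidOrder G (S'.image (image f)) k := by
  refine ⟨fun C hC => ?_, ?_⟩
  · calc k ≤ (C.preimage f hf.injOn).card := h.1 _ (hC.preimage_of_image hf)
      _ ≤ C.card := card_le_card_of_injOn f (fun _ hv => mem_preimage.mp hv) hf.injOn
  · rintro A ⟨_, hfE, hEA⟩ ⟨_, hfE', hE'A⟩
    obtain ⟨E, hE, rfl⟩ := mem_image.mp hfE
    obtain ⟨E', hE', rfl⟩ := mem_image.mp hfE'
    rw [image_subset_iff_subset_preimage hf.injOn] at hEA hE'A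
    rw [preimage_compl A hf] at hE'A
    exact (h.2 _ ⟨E, hE, hEA⟩ ⟨E', hE', hE'A⟩).trans (cut_preimage_le hf hle A)

end Multigraph

open Multigraph in
theorem scrambleOrder_le_of_subgraph_general {V' V : Type}
    [Fintype V'] [DecidableEq V'] [Fintype V] [DecidableEq V]
    (G' : Multigraph V') (G : Multigraph V)
    (f : V' → V) (hf : Function.Injective f)
    (hle : ∀ a b, G'.mul a b ≤ G.mul (f a) (f b))
    (S' : Finset (Finset V')) :
    scrambleOrder G' S' ≤ scrambleOrder G (S'.image (Finset.image f)) :=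
  csSup_le_csSup (bddAbove_validOrder _ _) ⟨0, validOrder_zero G' S'⟩
    fun _ hk => ValidOrder.image hk hf hle

open Multigraph in
/-- If `S'` is a scramble in a subgraph `G'` of `G` (the subgraph realized by the
injection `f`), then the scramble in `G` with the same eggs has scramble order at
least that of `S'` in `G'`. -/
theorem scrambleOrder_le_of_subgraph {V' V : Type}
    [Fintype V'] [DecidableEq V'] [Fintype V] [DecidableEq V]
    (G' : Multigraph V') (G : Multigraph V) (hG : G.Connected)
    (f : V' → V) (hf : Function.Injective f)
    (hle : ∀ a b, G'.mul a b ≤ G.mul (f a) (f b))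
    (S' : Finset (Finset V')) (hS' : IsScramble G' S') :
    scrambleOrder G' S' ≤ scrambleOrder G (S'.image (Finset.image f)) :=
  scrambleOrder_le_of_subgraph_general G' G f hf hle S'
end

section
/- For k ≥ 2, let G_k be the multigraph obtained from the path on k vertices by replacing each edge with k parallel edges. Then sn(G_k) = k while tw(G_k) = 1. In particular, the scramble number is unbounded in terms of the treewidth. -/
/-- A tree decomposition of a simple graph. -/
structure TreeDecomp {V : Type} (H : SimpleGraph V) where
  ι : Type
  [fin : Fintype ι]
  tree : SimpleGraph ι
  isTree : tree.IsTree
  bag : ι → Finset V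
  cover : ∀ v : V, ∃ i, v ∈ bag i
  coverEdge : ∀ u v : V, H.Adj u v → ∃ i, u ∈ bag i ∧ v ∈ bag i
  coherent : ∀ v : V, (SimpleGraph.induce {i | v ∈ bag i} tree).Connected

/-- The width of a tree decomposition: maximum bag size minus one. -/
def TreeDecomp.width {V : Type} {H : SimpleGraph V} (d : TreeDecomp H) : ℕ :=
  (@Finset.univ d.ι d.fin).sup (fun i => (d.bag i).card) - 1

/-- The treewidth of a simple graph: the minimum width of a tree decomposition. -/
noncomputable def treewidth {V : Type} (H : SimpleGraph V) : ℕ :=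
  sInf {n | ∃ d : TreeDecomp H, d.width = n}

namespace Multigraph

/-- The multigraph obtained from the path on `k` vertices by replacing every
edge with `m` parallel edges. -/
def pathMulti (k m : ℕ) : Multigraph (Fin k) where
  mul i j := if i.val + 1 = j.val ∨ j.val + 1 = i.val then m else 0
  symm := by intro u v; simp only [or_comm]
  loopless := by
    intro v
    have h : ¬(v.val + 1 = v.val ∨ v.val + 1 = v.val) := by omega
    simp [h]

end Multigraph

/-!
Every vertex subset `A` with `A` and its complement nonempty is crossed by an edge of the path,
which carries `k` parallel edges, so the scramble of the `k` singletons has order `k`; no scramble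
can do better since the whole vertex set hits every egg. The treewidth is `1` because the bags
`{i - 1, i}` along the path itself form a tree decomposition, and any bag containing an edge has
two vertices.
-/

open Finset

namespace SimpleGraph

variable {V : Type*} {G : SimpleGraph V}

lemma Reachable.exists_adj_mem_notMem {u v : V} {S : Set V} (h : G.Reachable u v) (hu : u ∈ S)
    (hv : v ∉ S) : ∃ a ∈ S, ∃ b ∉ S, G.Adj a b := by
  obtain ⟨p⟩ := h
  obtain ⟨d, -, hd, hd'⟩ := p.exists_boundary_dart S hu hv
  exact ⟨d.fst, hd, d.snd, hd', d.adj⟩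

lemma IsClique.induce_connected {s : Set V} (h : G.IsClique s) (hs : s.Nonempty) :
    (G.induce s).Connected := by
  have : Nonempty s := hs.to_subtype
  rw [induce_eq_top.mpr h]
  exact connected_top

lemma isAcyclic_pathGraph (n : ℕ) : (pathGraph n).IsAcyclic := by
  rw [isAcyclic_iff_forall_adj_isBridge]
  intro v w hvw
  wlog hvw' : v.val + 1 = w.val generalizing v w
  · rw [Sym2.eq_swap]
    exact this hvw.symm (by rw [pathGraph_adj] at hvw; omega)
  rw [isBridge_iff]
  intro hr
  -- the only edge leaving `{a | a ≤ v}` is the deleted one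
  obtain ⟨a, ha, b, hb, hab⟩ :=
    hr.exists_adj_mem_notMem (S := {a | a.val ≤ v.val}) (by simp) (by simp; omega)
  simp only [Set.mem_ofPred_eq, not_le] at ha hb
  rw [deleteEdges_adj, pathGraph_adj] at hab
  apply hab.2
  have hav : a = v := by ext; omega
  have hbw : b = w := by ext; omega
  simp [hav, hbw]

lemma isTree_pathGraph {n : ℕ} (hn : 0 < n) : (pathGraph n).IsTree := by
  obtain ⟨m, rfl⟩ := Nat.exists_eq_add_of_lt hn
  exact ⟨pathGraph_connected _, isAcyclic_pathGraph _⟩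

end SimpleGraph

namespace Multigraph

lemma connSubset_singleton {V : Type} (G : Multigraph V) (v : V) : G.ConnSubset {v} :=
  ⟨singleton_nonempty v, by
    rw [coe_singleton]
    exact (SimpleGraph.isClique_singleton v).induce_connected (Set.singleton_nonempty v)⟩

variable {V : Type} [Fintype V] [DecidableEq V] {G : Multigraph V}

lemma mul_le_cut {A : Finset V} {u v : V} (hu : u ∈ A) (hv : v ∉ A) : G.mul u v ≤ G.cut A :=
  calc G.mul u v ≤ ∑ w ∈ Aᶜ, G.mul u w :=
        single_le_sum (f := G.mul u) (fun _ _ => Nat.zero_le _) (mem_compl.mpr hv)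
    _ ≤ G.cut A := single_le_sum (f := fun x => ∑ w ∈ Aᶜ, G.mul x w) (fun _ _ => Nat.zero_le _) hu

section Scramble

variable {S : Finset (Finset V)}

lemma IsScramble.isHitting_univ (hS : IsScramble G S) : IsHitting S univ := fun E hE => by
  simpa using (hS E hE).1

lemma IsScramble.le_card_of_validOrder (hS : IsScramble G S) {k : ℕ} (h : ValidOrder G S k) :
    k ≤ Fintype.card V :=
  h.1 univ hS.isHitting_univ

lemma IsScramble.scrambleOrder_le_card (hS : IsScramble G S) :
    scrambleOrder G S ≤ Fintype.card V :=
  csSup_le' fun _ => hS.le_card_of_validOrder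

lemma IsScramble.le_scrambleOrder (hS : IsScramble G S) {k : ℕ} (h : ValidOrder G S k) :
    k ≤ scrambleOrder G S :=
  le_csSup ⟨_, fun _ => hS.le_card_of_validOrder⟩ h

lemma scrambleNumber_le_card : scrambleNumber G ≤ Fintype.card V :=
  csSup_le' fun _ ⟨_, hS, hn⟩ => hn ▸ hS.scrambleOrder_le_card

lemma IsScramble.scrambleOrder_le_scrambleNumber (hS : IsScramble G S) :
    scrambleOrder G S ≤ scrambleNumber G :=
  le_csSup ⟨_, fun _ ⟨_, hS', hn⟩ => hn ▸ hS'.scrambleOrder_le_card⟩ ⟨S, hS, rfl⟩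

end Scramble

variable (V) in
def singletonScramble : Finset (Finset V) := univ.image singleton

lemma mem_singletonScramble {E : Finset V} : E ∈ singletonScramble V ↔ ∃ v, E = {v} := by
  simp [singletonScramble, eq_comm]

lemma isScramble_singletonScramble (G : Multigraph V) : IsScramble G (singletonScramble V) :=
  fun _ hE => by
    obtain ⟨v, rfl⟩ := mem_singletonScramble.mp hE
    exact G.connSubset_singleton v

lemma validOrder_singletonScramble
    (hcut : ∀ A : Finset V, A.Nonempty → Aᶜ.Nonempty → Fintype.card V ≤ G.cut A) :
    ValidOrder G (singletonScramble V) (Fintype.card V) := by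
  refine ⟨fun C hC => ?_, ?_⟩
  · have hC : C = univ := eq_univ_of_forall fun v => by
      obtain ⟨x, hx⟩ := hC {v} (mem_singletonScramble.mpr ⟨v, rfl⟩)
      rw [mem_inter, mem_singleton] at hx
      exact hx.1 ▸ hx.2
    rw [hC, card_univ]
  · rintro A ⟨E, hE, hEA⟩ ⟨E', hE', hE'A⟩
    obtain ⟨v, rfl⟩ := mem_singletonScramble.mp hE
    obtain ⟨w, rfl⟩ := mem_singletonScramble.mp hE'
    exact hcut A ⟨v, hEA (mem_singleton_self v)⟩ ⟨w, hE'A (mem_singleton_self w)⟩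

theorem scrambleNumber_eq_card
    (hcut : ∀ A : Finset V, A.Nonempty → Aᶜ.Nonempty → Fintype.card V ≤ G.cut A) :
    scrambleNumber G = Fintype.card V := by
  have hS := isScramble_singletonScramble G
  refine le_antisymm scrambleNumber_le_card ?_
  calc Fintype.card V ≤ scrambleOrder G (singletonScramble V) :=
        hS.le_scrambleOrder (validOrder_singletonScramble hcut)
    _ ≤ scrambleNumber G := hS.scrambleOrder_le_scrambleNumber

variable {k m : ℕ}

lemma pathMulti_simple (hm : 0 < m) : (pathMulti k m).simple = SimpleGraph.pathGraph k := by
  ext u v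
  simp only [simple, pathMulti, SimpleGraph.pathGraph_adj]
  split_ifs with h <;> simp [h, hm]

lemma le_cut_pathMulti {A : Finset (Fin k)} (hA : A.Nonempty) (hAc : Aᶜ.Nonempty) :
    m ≤ (pathMulti k m).cut A := by
  obtain ⟨a, ha⟩ := hA
  obtain ⟨b, hb⟩ := hAc
  obtain ⟨u, hu, v, hv, huv⟩ :=
    (SimpleGraph.pathGraph_preconnected k a b).exists_adj_mem_notMem (S := A) ha (mem_compl.mp hb)
  have hmul : (pathMulti k m).mul u v = m := by
    simp [pathMulti, SimpleGraph.pathGraph_adj.mp huv]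
  exact hmul.symm.trans_le (mul_le_cut hu hv)

end Multigraph

section Treewidth

variable {V : Type} {H : SimpleGraph V}

namespace TreeDecomp

variable (d : TreeDecomp H)

lemma card_bag_le_width_add_one (i : d.ι) : (d.bag i).card ≤ d.width + 1 := by
  let _ : Fintype d.ι := d.fin
  have : (d.bag i).card ≤ univ.sup (fun j => (d.bag j).card) :=
    le_sup (f := fun j => (d.bag j).card) (mem_univ i)
  unfold width
  omega

lemma width_le {w : ℕ} (hw : ∀ i, (d.bag i).card ≤ w + 1) : d.width ≤ w := by
  let _ : Fintype d.ι := d.fin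
  have : univ.sup (fun i => (d.bag i).card) ≤ w + 1 := Finset.sup_le fun i _ => hw i
  unfold width
  omega

lemma one_le_width {u v : V} (huv : H.Adj u v) : 1 ≤ d.width := by
  classical
  obtain ⟨i, hu, hv⟩ := d.coverEdge u v huv
  have : 2 ≤ d.width + 1 :=
    calc 2 = ({u, v} : Finset V).card := (card_pair huv.ne).symm
      _ ≤ (d.bag i).card := card_le_card (insert_subset hu (singleton_subset_iff.mpr hv))
      _ ≤ d.width + 1 := d.card_bag_le_width_add_one i
  omega

end TreeDecomp

lemma treewidth_le_width (d : TreeDecomp H) : treewidth H ≤ d.width :=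
  Nat.sInf_le ⟨d, rfl⟩

lemma treewidth_eq_one (d : TreeDecomp H) (hd : d.width ≤ 1) {u v : V} (huv : H.Adj u v) :
    treewidth H = 1 := by
  obtain ⟨d', hd'⟩ := Nat.sInf_mem (s := {n | ∃ d : TreeDecomp H, d.width = n}) ⟨_, d, rfl⟩
  have h1 : 1 ≤ treewidth H := (d'.one_le_width huv).trans_eq hd'
  exact le_antisymm ((treewidth_le_width d).trans hd) h1

def pathGraphBag {n : ℕ} (i : Fin n) : Finset (Fin n) := {⟨i.val - 1, by omega⟩, i}

lemma mem_pathGraphBag {n : ℕ} {i j : Fin n} : j ∈ pathGraphBag i ↔ j ≤ i ∧ i.val ≤ j.val + 1 := by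
  simp only [pathGraphBag, mem_insert, mem_singleton, Fin.ext_iff, Fin.le_def]
  omega

def pathGraphDecomp (n : ℕ) (hn : 0 < n) : TreeDecomp (SimpleGraph.pathGraph n) where
  ι := Fin n
  tree := SimpleGraph.pathGraph n
  isTree := SimpleGraph.isTree_pathGraph hn
  bag := pathGraphBag
  cover v := ⟨v, mem_pathGraphBag.mpr (by simp)⟩
  coverEdge u v huv := by
    rcases SimpleGraph.pathGraph_adj.mp huv with h | h
    · exact ⟨v, by simp only [mem_pathGraphBag, Fin.le_def]; omega⟩
    · exact ⟨u, by simp only [mem_pathGraphBag, Fin.le_def]; omega⟩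
  coherent v := by
    refine SimpleGraph.IsClique.induce_connected (fun a ha b hb hab => ?_)
      ⟨v, mem_pathGraphBag.mpr (by simp)⟩
    simp only [Set.mem_ofPred_eq, mem_pathGraphBag, Fin.le_def] at ha hb
    have hab : a.val ≠ b.val := fun h => hab (Fin.ext h)
    rw [SimpleGraph.pathGraph_adj]
    omega

lemma pathGraphDecomp_width_le (n : ℕ) (hn : 0 < n) : (pathGraphDecomp n hn).width ≤ 1 :=
  TreeDecomp.width_le _ fun _ => card_le_two

end Treewidth

open Multigraph in
/-- For `k ≥ 2`, the multigraph obtained from the path on `k` vertices by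
replacing each edge with `k` parallel edges has scramble number `k` but
treewidth `1`; in particular, the scramble number is unbounded in terms of the
treewidth. -/
theorem scrambleNumber_pathMulti (k : ℕ) (hk : 2 ≤ k) :
    scrambleNumber (pathMulti k k) = k ∧ treewidth (pathMulti k k).simple = 1 := by
  have hk0 : 0 < k := by omega
  constructor
  · refine (scrambleNumber_eq_card fun A hA hAc => ?_).trans (Fintype.card_fin k)
    exact (Fintype.card_fin k).trans_le (le_cut_pathMulti hA hAc)
  · rw [pathMulti_simple hk0]
    exact treewidth_eq_one (pathGraphDecomp k hk0) (pathGraphDecomp_width_le k hk0)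
      (u := ⟨0, hk0⟩) (v := ⟨1, hk⟩) (by simp [SimpleGraph.pathGraph_adj])
end

section
/- Let G be a connected multigraph, S a scramble in G, and D an effective divisor of positive rank on G whose support meets the maximum number of eggs of S among all effective divisors equivalent to D. If the support of D meets every egg of S, or not, in either case deg(D) ≥ ||S||. -/
namespace Multigraph

variable {V : Type} [Fintype V] [DecidableEq V]

/-- The degree of a divisor: the total number of chips. -/
def deg (D : V → ℤ) : ℤ := ∑ v, D v

/-- A divisor is effective if no vertex is in debt. -/
def Effective (D : V → ℤ) : Prop := ∀ v, 0 ≤ D v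

/-- Chip-firing the vertex subset `A`: every vertex of `A` sends a chip along
each edge to the complement of `A`. -/
def fire (G : Multigraph V) (A : Finset V) (D : V → ℤ) : V → ℤ :=
  fun v => if v ∈ A then D v - ∑ u ∈ Aᶜ, (G.mul v u : ℤ)
           else D v + ∑ u ∈ A, (G.mul v u : ℤ)

/-- Equivalence of divisors: generated by chip-firing vertex subsets. -/
def LinEq (G : Multigraph V) : (V → ℤ) → (V → ℤ) → Prop :=
  Relation.ReflTransGen (fun X Y => ∃ A : Finset V, Y = G.fire A X)

/-- A divisor has positive rank if for every vertex `v` there is an equivalent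
effective divisor with a chip on `v`. -/
def PositiveRank (G : Multigraph V) (D : V → ℤ) : Prop :=
  ∀ v : V, ∃ D' : V → ℤ, LinEq G D D' ∧ Effective D' ∧ 1 ≤ D' v

/-- The gonality of a multigraph: the minimum degree of an effective divisor of
positive rank. -/
noncomputable def gonality (G : Multigraph V) : ℕ :=
  sInf {n : ℕ | ∃ D : V → ℤ, Effective D ∧ PositiveRank G D ∧ deg D = (n : ℤ)}

end Multigraph

/-!
If the support of `D` meets every egg it is a hitting set, so `deg D ≥ ‖S‖`. Otherwise let `E` be
an egg missed by `D`. Positive rank gives `D' = D - Δf ~ D` effective with a chip on `E`, where the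
potential `f ≥ 0` may be assumed. Truncating `f` at the levels `c = 0, 1, 2, …` interpolates between
`D'` and `D` by effective divisors `D_c`, each obtained from `D_{c+1}` by firing the level set
`A = {f > c}`. At the level where `D_c` starts to meet `E`, the egg `E` lies outside `A`, and
maximality of `D` produces an egg met by `D` but not by `D_c`, which must lie inside `A`. Since
`D_{c+1}` can fire `A` without going into debt, `cut A ≤ deg D_{c+1} = deg D`.
-/

theorem Nat.exists_and_not_succ {P : ℕ → Prop} {N : ℕ} (h0 : P 0) (hN : ¬ P N) :
    ∃ n, P n ∧ ¬ P (n + 1) := by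
  by_contra! h
  induction N with
  | zero => exact hN h0
  | succ n ih => exact hN (h n (by_contra ih))

theorem Finset.exists_of_card_filter_le {α : Type*} {s : Finset α} {p q : α → Prop}
    [DecidablePred p] [DecidablePred q] (h : (s.filter p).card ≤ (s.filter q).card) {a : α}
    (ha : a ∈ s) (hpa : p a) (hqa : ¬ q a) : ∃ b ∈ s, q b ∧ ¬ p b := by
  by_contra! hqp
  have hsub : s.filter q ⊂ s.filter p :=
    (ssubset_iff_of_subset fun b hb => mem_filter.2
      ⟨(mem_filter.1 hb).1, hqp b (mem_filter.1 hb).1 (mem_filter.1 hb).2⟩).2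
      ⟨a, mem_filter.2 ⟨ha, hpa⟩, fun h' => hqa (mem_filter.1 h').2⟩
  exact (card_lt_card hsub).not_ge h

namespace Multigraph

open Finset

variable {V : Type}

def truncate (f : V → ℤ) (c : ℕ) : V → ℤ :=
  fun u => max (f u - c) 0

lemma truncate_nonneg (f : V → ℤ) (c : ℕ) (u : V) : 0 ≤ truncate f c u :=
  le_max_right _ _

lemma truncate_pos_iff {f : V → ℤ} {c : ℕ} {u : V} : 0 < truncate f c u ↔ (c : ℤ) < f u := by
  simp [truncate]

lemma truncate_zero {f : V → ℤ} (hf : ∀ u, 0 ≤ f u) : truncate f 0 = f :=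
  funext fun u => by simp [truncate, hf u]

lemma exists_truncate_eq_zero [Finite V] (f : V → ℤ) :
    ∃ N : ℕ, ∀ c, N ≤ c → truncate f c = 0 := by
  obtain ⟨M, hM⟩ := (Set.finite_range f).bddAbove
  refine ⟨M.toNat, fun c hc => funext fun u => max_eq_right ?_⟩
  have := hM (Set.mem_range_self u)
  omega

lemma forall_of_induce_connected {G : Multigraph V} {E : Finset V} {p : V → Prop}
    (hE : (G.simple.induce (E : Set V)).Connected) (hmeet : ∃ v ∈ E, p v)
    (hsep : ∀ a ∈ E, ∀ b ∈ E, p a → ¬ p b → G.mul a b = 0) : ∀ v ∈ E, p v := by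
  intro w hw
  by_contra hpw
  obtain ⟨v, hv, hpv⟩ := hmeet
  obtain ⟨path⟩ := hE.preconnected ⟨v, hv⟩ ⟨w, hw⟩
  obtain ⟨d, -, hd, hd'⟩ := path.exists_boundary_dart {x | p x.1} hpv hpw
  have hadj : 0 < G.mul d.fst d.snd := d.adj
  rw [hsep _ d.fst.2 _ d.snd.2 hd hd'] at hadj
  exact lt_irrefl 0 hadj

variable [Fintype V] (G : Multigraph V)

def lap (f : V → ℤ) : V → ℤ :=
  fun v => ∑ u, (G.mul v u : ℤ) * (f v - f u)

lemma lap_add (f g : V → ℤ) : G.lap (f + g) = G.lap f + G.lap g := by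
  funext v
  simp only [lap, Pi.add_apply, ← sum_add_distrib]
  exact sum_congr rfl fun u _ => by ring

lemma lap_zero : G.lap 0 = 0 := by
  funext v
  simp [lap]

lemma lap_add_const (f : V → ℤ) (c : ℤ) : G.lap (fun u => f u + c) = G.lap f := by
  funext v
  simp only [lap]
  exact sum_congr rfl fun u _ => by ring

lemma sum_lap (f : V → ℤ) : ∑ v, G.lap f v = 0 := by
  simp only [lap, mul_sub, sum_sub_distrib]
  rw [sub_eq_zero, sum_comm]
  exact sum_congr rfl fun v _ => sum_congr rfl fun u _ => by rw [G.symm]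

lemma deg_sub_lap (D f : V → ℤ) : deg (D - G.lap f) = deg D := by
  simp [deg, sum_sub_distrib, sum_lap]

lemma card_filter_pos_le_deg {D : V → ℤ} (hD : Effective D) :
    ((univ.filter fun v => 0 < D v).card : ℤ) ≤ deg D := by
  rw [card_eq_sum_ones, Nat.cast_sum, Nat.cast_one]
  calc ∑ v ∈ univ.filter (fun v => 0 < D v), (1 : ℤ)
      ≤ ∑ v ∈ univ.filter (fun v => 0 < D v), D v :=
        sum_le_sum fun v hv => (mem_filter.1 hv).2
    _ ≤ deg D := sum_le_sum_of_subset_of_nonneg (subset_univ _) fun v _ _ => hD v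

variable {G}

lemma effective_sub_lap_truncate {D f : V → ℤ} (hD : Effective D) (hf : Effective (D - G.lap f))
    (c : ℕ) : Effective (D - G.lap (truncate f c)) := by
  -- at most level `c`, `v` only receives chips; above it, no edge carries more than under `f`
  intro v
  have hfv := hf v
  simp only [Pi.sub_apply] at hfv ⊢
  rcases le_or_gt (f v) c with hv | hv
  · have : G.lap (truncate f c) v ≤ 0 := sum_nonpos fun u _ =>
      mul_nonpos_of_nonneg_of_nonpos (by positivity) (by simp [truncate, hv])
    linarith [hD v]
  · have : G.lap (truncate f c) v ≤ G.lap f v := sum_le_sum fun u _ =>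
      mul_le_mul_of_nonneg_left (by simp only [truncate]; omega) (by positivity)
    linarith

lemma forall_pos_of_sub_lap {D g : V → ℤ} {E : Finset V} (hg : ∀ u, 0 ≤ g u)
    (hD : Effective D) (hE : (G.simple.induce (E : Set V)).Connected)
    (hhit : ∃ z ∈ E, 0 < D z) (hmiss : ∀ v ∈ E, (D - G.lap g) v ≤ 0) : ∀ v ∈ E, 0 < g v := by
  have key : ∀ v ∈ E, g v = 0 → D v = 0 ∧ ∀ u, 0 < g u → G.mul v u = 0 := by
    intro v hv hgv
    have hterms : ∀ u ∈ univ, 0 ≤ (G.mul v u : ℤ) * g u := fun u _ => by positivity [hg u]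
    have hsub : (D - G.lap g) v = D v + ∑ u, (G.mul v u : ℤ) * g u := by
      simp [lap, hgv, sub_eq_add_neg]
    have hzero : ∑ u, (G.mul v u : ℤ) * g u = 0 :=
      le_antisymm (by linarith [hmiss v hv, hD v]) (sum_nonneg hterms)
    refine ⟨by linarith [hmiss v hv, hD v], fun u hu => ?_⟩
    have := (sum_eq_zero_iff_of_nonneg hterms).1 hzero u (mem_univ u)
    exact_mod_cast (mul_eq_zero.1 this).resolve_right hu.ne'
  obtain ⟨z, hz, hDz⟩ := hhit
  refine forall_of_induce_connected hE ⟨z, hz, ?_⟩ fun a _ b hb ha hb' => ?_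
  · exact (hg z).lt_of_ne fun h => hDz.ne' (key z hz h.symm).1
  · rw [G.symm]
    exact (key b hb (le_antisymm (not_lt.1 hb') (hg b))).2 a ha

def levelSet (f : V → ℤ) (c : ℕ) : Finset V :=
  {u | (c : ℤ) < f u}

lemma mem_levelSet {f : V → ℤ} {c : ℕ} {u : V} : u ∈ levelSet f c ↔ (c : ℤ) < f u := by
  simp [levelSet]

variable [DecidableEq V]

lemma truncate_eq_truncate_succ_add (f : V → ℤ) (c : ℕ) :
    truncate f c = truncate f (c + 1) + fun u => if u ∈ levelSet f c then 1 else 0 := by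
  funext u
  simp only [truncate, mem_levelSet, Pi.add_apply]
  split_ifs <;> omega

variable (G)

lemma fire_eq_sub_lap (A : Finset V) (D : V → ℤ) :
    G.fire A D = D - G.lap fun u => if u ∈ A then 1 else 0 := by
  funext v
  have hA : ∑ u ∈ A, (G.mul v u : ℤ) * ((if v ∈ A then 1 else 0) - if u ∈ A then 1 else 0) =
      if v ∈ A then 0 else -∑ u ∈ A, (G.mul v u : ℤ) := by
    split_ifs <;> simp +contextual
  have hAc : ∑ u ∈ Aᶜ, (G.mul v u : ℤ) * ((if v ∈ A then 1 else 0) - if u ∈ A then 1 else 0) =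
      if v ∈ A then ∑ u ∈ Aᶜ, (G.mul v u : ℤ) else 0 := by
    split_ifs
    · exact sum_congr rfl fun u hu => by simp [mem_compl.1 hu]
    · exact sum_eq_zero fun u hu => by simp [mem_compl.1 hu]
  rw [fire, Pi.sub_apply, lap, ← sum_add_sum_compl A, hA, hAc]
  split_ifs <;> ring

lemma fire_levelSet (D f : V → ℤ) (c : ℕ) :
    G.fire (levelSet f c) (D - G.lap (truncate f (c + 1))) = D - G.lap (truncate f c) := by
  rw [fire_eq_sub_lap, sub_sub, ← lap_add, ← truncate_eq_truncate_succ_add]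

lemma linEq_sub_lap_truncate (D f : V → ℤ) (c : ℕ) : G.LinEq D (D - G.lap (truncate f c)) := by
  obtain ⟨N, hN⟩ := exists_truncate_eq_zero f
  suffices ∀ k c, N ≤ c + k → G.LinEq D (D - G.lap (truncate f c)) from this N c (by omega)
  intro k
  induction k with
  | zero =>
    intro c hc
    rw [hN c hc, lap_zero, sub_zero]
    exact .refl
  | succ k ih =>
    intro c hc
    rw [← fire_levelSet]
    exact (ih (c + 1) (by omega)).tail ⟨_, rfl⟩

lemma LinEq.exists_potential {D D' : V → ℤ} (h : G.LinEq D D') :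
    ∃ f : V → ℤ, D' = D - G.lap f := by
  induction h with
  | refl => exact ⟨0, by simp [lap_zero]⟩
  | tail _ hstep ih =>
    obtain ⟨f, rfl⟩ := ih
    obtain ⟨A, rfl⟩ := hstep
    exact ⟨f + fun u => if u ∈ A then 1 else 0, by rw [fire_eq_sub_lap, lap_add, sub_sub]⟩

lemma LinEq.exists_nonneg_potential {D D' : V → ℤ} (h : G.LinEq D D') :
    ∃ f : V → ℤ, (∀ u, 0 ≤ f u) ∧ D' = D - G.lap f := by
  obtain ⟨f, rfl⟩ := h.exists_potential
  obtain ⟨m, hm⟩ := (Set.finite_range f).bddBelow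
  refine ⟨fun u => f u + -m, fun u => ?_, by rw [lap_add_const]⟩
  have := hm (Set.mem_range_self u)
  simp only
  omega

variable {G}

lemma cut_le_deg_of_effective_fire {A : Finset V} {D : V → ℤ} (hD : Effective D)
    (hF : Effective (G.fire A D)) : (G.cut A : ℤ) ≤ deg D := by
  have hout : ∀ v ∈ A, ∑ u ∈ Aᶜ, (G.mul v u : ℤ) ≤ D v := fun v hv => by
    have := hF v
    simp only [fire, if_pos hv] at this
    linarith
  calc (G.cut A : ℤ) = ∑ v ∈ A, ∑ u ∈ Aᶜ, (G.mul v u : ℤ) := by simp [cut]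
    _ ≤ ∑ v ∈ A, D v := sum_le_sum hout
    _ ≤ deg D := sum_le_sum_of_subset_of_nonneg (subset_univ A) fun v _ _ => hD v

lemma subset_compl_of_effective_fire {A E : Finset V} {D : V → ℤ} (hF : Effective (G.fire A D))
    (hE : (G.simple.induce (E : Set V)).Connected) (hD : ∀ v ∈ E, D v ≤ 0)
    (hhit : ∃ w ∈ E, 0 < G.fire A D w) : E ⊆ Aᶜ := by
  have key : ∀ v ∈ E, v ∈ A → G.fire A D v = 0 ∧ ∀ u ∉ A, G.mul v u = 0 := by
    intro v hv hvA
    have hfire : G.fire A D v = D v - ∑ u ∈ Aᶜ, (G.mul v u : ℤ) := if_pos hvA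
    have hterms : ∀ u ∈ Aᶜ, (0 : ℤ) ≤ G.mul v u := fun _ _ => by positivity
    have hout : ∑ u ∈ Aᶜ, (G.mul v u : ℤ) = 0 :=
      le_antisymm (by linarith [hF v, hD v hv]) (sum_nonneg hterms)
    refine ⟨by linarith [hF v, hD v hv], fun u hu => ?_⟩
    exact_mod_cast (sum_eq_zero_iff_of_nonneg hterms).1 hout u (mem_compl.2 hu)
  obtain ⟨w, hw, hpos⟩ := hhit
  refine fun v hv => mem_compl.2 (forall_of_induce_connected (p := (· ∉ A)) hE
    ⟨w, hw, fun hwA => hpos.ne' (key w hw hwA).1⟩ (fun a _ b hb ha hb' => ?_) v hv)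
  rw [G.symm]
  exact (key b hb (not_not.1 hb')).2 a ha

lemma exists_cut_le_deg_of_not_hit {S : Finset (Finset V)} (hS : IsScramble G S) {D : V → ℤ}
    (hEff : Effective D) (hRank : PositiveRank G D)
    (hMax : ∀ D' : V → ℤ, LinEq G D D' → Effective D' →
      (S.filter fun E => ∃ v ∈ E, 0 < D' v).card ≤
        (S.filter fun E => ∃ v ∈ E, 0 < D v).card)
    {E : Finset V} (hE : E ∈ S) (hmiss : ∀ v ∈ E, D v ≤ 0) :
    ∃ A : Finset V, (∃ E' ∈ S, E' ⊆ A) ∧ (∃ E' ∈ S, E' ⊆ Aᶜ) ∧ (G.cut A : ℤ) ≤ deg D := by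
  obtain ⟨⟨q, hq⟩, hEconn⟩ := hS E hE
  obtain ⟨_, hlin, hD'eff, hD'q⟩ := hRank q
  obtain ⟨f, hf, rfl⟩ := hlin.exists_nonneg_potential
  have hDc : ∀ c, Effective (D - G.lap (truncate f c)) := effective_sub_lap_truncate hEff hD'eff
  obtain ⟨N, hN⟩ := exists_truncate_eq_zero f
  obtain ⟨c, hhit, hmiss'⟩ := Nat.exists_and_not_succ
    (P := fun c => ∃ v ∈ E, 0 < (D - G.lap (truncate f c)) v) (N := N)
    ⟨q, hq, by rw [truncate_zero hf]; omega⟩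
    (by rw [hN N le_rfl, lap_zero, sub_zero]; exact fun ⟨v, hv, h⟩ => (hmiss v hv).not_gt h)
  have hfire := G.fire_levelSet D f c
  have hEout : E ⊆ (levelSet f c)ᶜ := subset_compl_of_effective_fire (hfire ▸ hDc c) hEconn
    (fun v hv => not_lt.1 fun h => hmiss' ⟨v, hv, h⟩) (hfire ▸ hhit)
  obtain ⟨E', hE', hE'D, hE'Dc⟩ := exists_of_card_filter_le
    (hMax _ (G.linEq_sub_lap_truncate D f c) (hDc c)) hE hhit
    fun ⟨v, hv, h⟩ => (hmiss v hv).not_gt h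
  have hE'in : E' ⊆ levelSet f c := fun v hv => mem_levelSet.2 <| truncate_pos_iff.1 <|
    forall_pos_of_sub_lap (truncate_nonneg f c) hEff (hS E' hE').2 hE'D
      (fun v hv => not_lt.1 fun h => hE'Dc ⟨v, hv, h⟩) v hv
  refine ⟨levelSet f c, ⟨E', hE', hE'in⟩, ⟨E, hE, hEout⟩, ?_⟩
  calc (G.cut (levelSet f c) : ℤ) ≤ deg (D - G.lap (truncate f (c + 1))) :=
        cut_le_deg_of_effective_fire (hDc (c + 1)) (hfire ▸ hDc c)
    _ = deg D := G.deg_sub_lap D _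

end Multigraph

open Multigraph in
theorem deg_ge_scrambleOrder_general {V : Type} [Fintype V] [DecidableEq V]
    (G : Multigraph V) (S : Finset (Finset V))
    (hS : IsScramble G S) (D : V → ℤ)
    (hEff : Effective D) (hRank : PositiveRank G D)
    (hMax : ∀ D' : V → ℤ, LinEq G D D' → Effective D' →
      (S.filter fun E => ∃ v ∈ E, 0 < D' v).card ≤
        (S.filter fun E => ∃ v ∈ E, 0 < D v).card) :
    (scrambleOrder G S : ℤ) ≤ deg D := by
  suffices h : ∀ k, ValidOrder G S k → (k : ℤ) ≤ deg D by
    have hdeg : 0 ≤ deg D := Finset.sum_nonneg fun v _ => hEff v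
    have : scrambleOrder G S ≤ (deg D).toNat := csSup_le' fun k hk => by have := h k hk; omega
    omega
  intro k hk
  by_cases hhit : IsHitting S (Finset.univ.filter fun v => 0 < D v)
  · exact (Nat.cast_le.2 (hk.1 _ hhit)).trans (card_filter_pos_le_deg hEff)
  · obtain ⟨E, hE, hmiss⟩ : ∃ E ∈ S, ∀ v ∈ E, D v ≤ 0 := by
      simpa [IsHitting, Finset.Nonempty] using hhit
    obtain ⟨A, hin, hout, hcut⟩ := exists_cut_le_deg_of_not_hit hS hEff hRank hMax hE hmiss
    exact (Nat.cast_le.2 (hk.2 A hin hout)).trans hcut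

open Multigraph in
/-- Let `S` be a scramble in a connected multigraph `G` and `D` an effective
divisor of positive rank whose support meets the maximum number of eggs of `S`
among all equivalent effective divisors.  Then (whether or not the support of
`D` meets every egg) `deg D ≥ ‖S‖`. -/
theorem deg_ge_scrambleOrder {V : Type} [Fintype V] [DecidableEq V]
    (G : Multigraph V) (hG : G.Connected) (S : Finset (Finset V))
    (hS : IsScramble G S) (D : V → ℤ)
    (hEff : Effective D) (hRank : PositiveRank G D)
    (hMax : ∀ D' : V → ℤ, LinEq G D D' → Effective D' →
      (S.filter fun E => ∃ v ∈ E, 0 < D' v).card ≤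
        (S.filter fun E => ∃ v ∈ E, 0 < D v).card) :
    (scrambleOrder G S : ℤ) ≤ deg D :=
  deg_ge_scrambleOrder_general G S hS D hEff hRank hMax
end
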